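/- arXiv:math/0105221 — 4 statements merged into one kernel-verified Lean document; each statement's English description precedes it below -/
import Mathlib

section
/- Let X ⊂ B^k be measurable and p ∈ B^k. Suppose that for almost every line l through p (with respect to the natural probability measure on the (k−1)-dimensional projective space of directions), p is a density point of X ∩ l in l with respect to one-dimensional Lebesgue measure on l. Then p is a Lebesgue density point of X in B^k, i.e. |X ∩ B_ε(p)| / |B_ε(p)| → 1 as ε → 0. -/
open MeasureTheory Set Filter Topology Function

noncomputable section

/-- The dynamical interval `I = [-1,1]`. -/
def II : Set ℝ := Set.Icc (-1) 1

/-- The one-dimensional parameter interval `B¹ = [-1,1]`. -/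
def B1 : Set ℝ := Set.Icc (-1) 1

/-- A unimodal map: a `C²` even map `f : I → I` with `f(-1) = -1`, `Df(-1) ≥ 1`
(and `D²f(-1) < 0` if `Df(-1) = 1`), whose unique critical point is `0`.
We model maps of `I` as globally defined real maps. -/
structure IsUnimodal (f : ℝ → ℝ) : Prop where
  smooth : ContDiff ℝ 2 f
  mapsTo : Set.MapsTo f II II
  even : ∀ x ∈ II, f (-x) = f x
  fixedPt : f (-1) = -1
  deriv_ge_one : 1 ≤ deriv f (-1)
  second_deriv_neg : deriv f (-1) = 1 → iteratedDeriv 2 f (-1) < 0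
  critical : deriv f 0 = 0
  critical_unique : ∀ x ∈ II, deriv f x = 0 → x = 0

/-- The Schwarzian derivative `Sf = D³f/Df − (3/2)(D²f/Df)²`. -/
def Schwarzian (f : ℝ → ℝ) (x : ℝ) : ℝ :=
  iteratedDeriv 3 f x / deriv f x - (3 / 2) * (iteratedDeriv 2 f x / deriv f x) ^ 2

/-- An S-unimodal map: a `C³` unimodal map with negative Schwarzian derivative on
`I ∖ {0}` and non-degenerate critical point. -/
structure IsSUnimodal (f : ℝ → ℝ) extends IsUnimodal f : Prop where
  smooth3 : ContDiff ℝ 3 f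
  schwarzian_neg : ∀ x ∈ II, x ≠ 0 → Schwarzian f x < 0
  nondeg : iteratedDeriv 2 f 0 ≠ 0

/-- `x` is a periodic point of (minimal) period `n ≥ 1` for `f`. -/
def PeriodicOfPeriod (f : ℝ → ℝ) (n : ℕ) (x : ℝ) : Prop :=
  1 ≤ n ∧ f^[n] x = x ∧ ∀ m, 1 ≤ m → m < n → f^[m] x ≠ x

/-- A hyperbolic periodic attractor in `A`: periodic point of period `n` with
multiplier `|Df^n(x)| < 1`. -/
def AttractingPeriodicPt (f : ℝ → ℝ) (A : Set ℝ) (n : ℕ) (x : ℝ) : Prop :=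
  x ∈ A ∧ PeriodicOfPeriod f n x ∧ |deriv (f^[n]) x| < 1

/-- `f` is regular on `A`: it has a hyperbolic periodic attractor in `A`. -/
def RegularOn (f : ℝ → ℝ) (A : Set ℝ) : Prop :=
  ∃ n x, AttractingPeriodicPt f A n x

/-- `f` is regular (on the dynamical interval `I`). -/
def Regular (f : ℝ → ℝ) : Prop := RegularOn f II

/-- All periodic orbits of `f` in `A` are repelling: `|Df^n(x)| > 1`. -/
def AllPeriodicRepelling (f : ℝ → ℝ) (A : Set ℝ) : Prop :=
  ∀ n x, x ∈ A → PeriodicOfPeriod f n x → 1 < |deriv (f^[n]) x|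

/-- The Collet-Eckmann condition: `|Df^n(f(0))| > C λ^n` for all `n > 0`. -/
def CollEck (f : ℝ → ℝ) : Prop :=
  ∃ C > 0, ∃ lam > 1, ∀ n : ℕ, 0 < n → C * lam ^ n < |deriv (f^[n]) (f 0)|

/-- The Backwards Collet-Eckmann condition on `A`: `|Df^n(x)| > C λ^n`
whenever `f^n(x) = 0`, `n > 0`. -/
def BackCollEck (f : ℝ → ℝ) (A : Set ℝ) : Prop :=
  ∃ C > 0, ∃ lam > 1, ∀ n : ℕ, 0 < n → ∀ x ∈ A, f^[n] x = 0 →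
    C * lam ^ n < |deriv (f^[n]) x|

/-- Polynomial Recurrence: for some `α > 0`, `|f^n(0)| > n^{-α}` for all large `n`. -/
def PolyRec (f : ℝ → ℝ) : Prop :=
  ∃ α > (0 : ℝ), ∀ᶠ n : ℕ in atTop, (n : ℝ) ^ (-α) < |f^[n] 0|

/-- Subexponential Recurrence: for every `α > 0`, `|f^n(0)| > e^{-αn}` for all large `n`. -/
def SubexpRec (f : ℝ → ℝ) : Prop :=
  ∀ α > (0 : ℝ), ∀ᶠ n : ℕ in atTop, Real.exp (-α * n) < |f^[n] 0|

/-- The Birkhoff-like sum appearing in the Weak Regularity condition. -/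
def wrSum (f : ℝ → ℝ) (δ : ℝ) (n : ℕ) : ℝ :=
  (1 / n) * ∑ k ∈ Finset.Icc 1 n,
    if f^[k] 0 ∈ Set.Ioo (-δ) δ then Real.log |deriv f (f^[k] 0)| else 0

/-- Weak Regularity:
`lim_{δ→0⁺} liminf_{n→∞} (1/n) Σ_{1 ≤ k ≤ n, f^k(0) ∈ (−δ,δ)} ln|Df(f^k(0))| = 0`. -/
def WeaklyRegular (f : ℝ → ℝ) : Prop :=
  Tendsto (fun δ : ℝ => Filter.liminf (fun n : ℕ => wrSum f δ n) atTop)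
    (nhdsWithin 0 (Set.Ioi 0)) (nhds 0)

/-- Topological conjugacy between `f` on `A` and `g` on `B` (for compact intervals, a
continuous bijection is automatically a homeomorphism). -/
def TopConjOn (f g : ℝ → ℝ) (A B : Set ℝ) : Prop :=
  ∃ h : ℝ → ℝ, ContinuousOn h A ∧ Set.BijOn h A B ∧ ∀ x ∈ A, h (f x) = g (h x)

/-- Hybrid equivalence: topological conjugacy, and in the presence of attracting
hyperbolic periodic orbits, equality of the multipliers. -/
def HybridEquivOn (f g : ℝ → ℝ) (A B : Set ℝ) : Prop :=
  TopConjOn f g A B ∧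
  ∀ n x m y, AttractingPeriodicPt f A n x → AttractingPeriodicPt g B m y →
    |deriv (f^[n]) x| = |deriv (g^[m]) y|

/-- The quadratic map `q_t(x) = t - x²`. -/
def qmap (t : ℝ) : ℝ → ℝ := fun x => t - x ^ 2

/-- The right endpoint `β_t` of the invariant interval of `q_t`:
the orientation-reversing fixed endpoint `q_t(-β_t) = -β_t`. -/
def qβ (t : ℝ) : ℝ := (1 + Real.sqrt (1 + 4 * t)) / 2

/-- The invariant interval `I_t = [-β_t, β_t]` of the quadratic map `q_t`. -/
def qI (t : ℝ) : Set ℝ := Set.Icc (-qβ t) (qβ t)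

/-- A quasisymmetric homeomorphism of `ℝ`. -/
def IsQS (H : ℝ → ℝ) : Prop :=
  Continuous H ∧ Function.Bijective H ∧ ∃ k > (1 : ℝ), ∀ x : ℝ, ∀ t > (0 : ℝ),
    1 / k ≤ (H (x + t) - H x) / (H x - H (x - t)) ∧
    (H (x + t) - H x) / (H x - H (x - t)) ≤ k

/-- The parameter space `ℝ^k`. -/
abbrev EE (k : ℕ) := EuclideanSpace ℝ (Fin k)

/-- The closed unit parameter ball `B^k ⊂ ℝ^k`. -/
def pBall (k : ℕ) : Set (EE k) := Metric.closedBall 0 1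

/-- The uncurried version of a family. -/
def uncurryF {k : ℕ} (F : EE k → ℝ → ℝ) : EE k × ℝ → ℝ := fun q => F q.1 q.2

/-- A `C²` `k`-parameter family of unimodal maps. -/
def IsC2Fam (k : ℕ) (F : EE k → ℝ → ℝ) : Prop :=
  ContDiff ℝ 2 (uncurryF F) ∧ ∀ p ∈ pBall k, IsUnimodal (F p)

/-- An analytic `k`-parameter family of S-unimodal maps. -/
def IsAnalyticSFam (k : ℕ) (F : EE k → ℝ → ℝ) : Prop :=
  AnalyticOnNhd ℝ (uncurryF F) (pBall k ×ˢ II) ∧ ∀ p ∈ pBall k, IsSUnimodal (F p)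

/-- A `C^r` `k`-parameter family of S-unimodal maps. -/
def IsCrSFam (r k : ℕ) (F : EE k → ℝ → ℝ) : Prop :=
  ContDiff ℝ r (uncurryF F) ∧ ∀ p ∈ pBall k, IsSUnimodal (F p)

/-- A family is non-trivial if some parameter is regular. -/
def NonTrivialFam (k : ℕ) (F : EE k → ℝ → ℝ) : Prop :=
  ∃ p ∈ pBall k, Regular (F p)

/-- `C^r`-closeness of two families: all partial derivatives up to order `r`
are `ε`-close on `B^k × I`. -/
def CrClose (r k : ℕ) (ε : ℝ) (F G : EE k → ℝ → ℝ) : Prop :=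
  ∀ i : ℕ, i ≤ r → ∀ q ∈ pBall k ×ˢ II,
    ‖iteratedFDeriv ℝ i (uncurryF F) q - iteratedFDeriv ℝ i (uncurryF G) q‖ < ε

/-- Convergence of a sequence of families in the `C²` topology: uniform convergence on
`B^k × I` of the maps and their partial derivatives up to order 2. -/
def C2TendstoFam (k : ℕ) (Fn : ℕ → EE k → ℝ → ℝ) (F : EE k → ℝ → ℝ) : Prop :=
  ∀ i : ℕ, i ≤ 2 → TendstoUniformlyOn
    (fun n => iteratedFDeriv ℝ i (uncurryF (Fn n)))
    (iteratedFDeriv ℝ i (uncurryF F)) atTop (pBall k ×ˢ II)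

/-- A `C²` one-parameter family of unimodal maps (parameter in `B¹ = [-1,1]`). -/
def IsC2Fam1 (F : ℝ → ℝ → ℝ) : Prop :=
  ContDiff ℝ 2 (fun q : ℝ × ℝ => F q.1 q.2) ∧ ∀ t ∈ B1, IsUnimodal (F t)

/-- An analytic one-parameter family of S-unimodal maps. -/
def IsAnalyticSFam1 (F : ℝ → ℝ → ℝ) : Prop :=
  AnalyticOnNhd ℝ (fun q : ℝ × ℝ => F q.1 q.2) (B1 ×ˢ II) ∧ ∀ t ∈ B1, IsSUnimodal (F t)

/-- The Tsujii transversality sum `Σ_j v(f^j(0))/Df^j(f(0))` for a one-parameter family,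
where `v = (∂/∂t) f_t |_{t=t₀}` and `f = f_{t₀}`. -/
def tsujiiSum1 (F : ℝ → ℝ → ℝ) (t₀ : ℝ) : ℝ :=
  ∑' j : ℕ, deriv (fun t => F t ((F t₀)^[j] 0)) t₀ / deriv ((F t₀)^[j]) (F t₀ 0)

/-- The Tsujii conditions for a one-parameter family at parameter `t₀`: `f_{t₀}`
satisfies CE, BCE, SE, has quadratic critical point, all periodic orbits repelling,
and the Tsujii transversality condition holds. -/
def TsujiiConds1 (F : ℝ → ℝ → ℝ) (t₀ : ℝ) : Prop :=
  CollEck (F t₀) ∧ BackCollEck (F t₀) II ∧ SubexpRec (F t₀) ∧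
  iteratedDeriv 2 (F t₀) 0 ≠ 0 ∧ AllPeriodicRepelling (F t₀) II ∧
  tsujiiSum1 F t₀ ≠ 0

/-- Tsujii transversality for a `k`-parameter family at `p`: some affine line
`t ↦ p + (t - t₀)w` through `p`, mapping `B¹` into `B^k` with `t₀` interior, along which
the one-parameter transversality sum is non-zero. -/
def TsujiiTransverseK (k : ℕ) (F : EE k → ℝ → ℝ) (p : EE k) : Prop :=
  ∃ (w : EE k) (t₀ : ℝ), t₀ ∈ Set.Ioo (-1 : ℝ) 1 ∧
    (∀ t ∈ Set.Icc (-1 : ℝ) 1, p + (t - t₀) • w ∈ pBall k) ∧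
    (∑' j : ℕ, deriv (fun t : ℝ => F (p + (t - t₀) • w) ((F p)^[j] 0)) t₀ /
        deriv ((F p)^[j]) (F p 0)) ≠ 0

/-- The Tsujii conditions for a `k`-parameter family at parameter `p`. -/
def TsujiiCondsK (k : ℕ) (F : EE k → ℝ → ℝ) (p : EE k) : Prop :=
  CollEck (F p) ∧ BackCollEck (F p) II ∧ SubexpRec (F p) ∧
  iteratedDeriv 2 (F p) 0 ≠ 0 ∧ AllPeriodicRepelling (F p) II ∧
  TsujiiTransverseK k F p

/-- `t₀` is a one-dimensional Lebesgue density point of `S`. -/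
def DensityPt1 (S : Set ℝ) (t₀ : ℝ) : Prop :=
  Tendsto (fun ε => volume (S ∩ Set.Icc (t₀ - ε) (t₀ + ε)) / volume (Set.Icc (t₀ - ε) (t₀ + ε)))
    (nhdsWithin 0 (Set.Ioi 0)) (nhds 1)

/-- `p` is a Lebesgue density point of `S ⊂ ℝ^k`. -/
def DensityPtK (k : ℕ) (S : Set (EE k)) (p : EE k) : Prop :=
  Tendsto (fun ε => volume (S ∩ Metric.closedBall p ε) / volume (Metric.closedBall p ε))
    (nhdsWithin 0 (Set.Ioi 0)) (nhds 1)

/-- `p` is a density point of `X` along the line through `p` with direction `v`. -/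
def DensityAlong (k : ℕ) (X : Set (EE k)) (p : EE k) (v : EE k) : Prop :=
  Tendsto (fun ε => volume {r ∈ Set.Ioo (-ε) ε | p + r • v ∈ X} / volume (Set.Ioo (-ε) (ε : ℝ)))
    (nhdsWithin 0 (Set.Ioi 0)) (nhds 1)

/-- The set `X_F` of good parameters of a family: regular, or Tsujii conditions
together with Weak Regularity. -/
def XF (k : ℕ) (F : EE k → ℝ → ℝ) : Set (EE k) :=
  {p ∈ pBall k | Regular (F p) ∨ (TsujiiCondsK k F p ∧ WeaklyRegular (F p))}

/-- The density `d(F,Y) = |Y ∩ X_F|/|Y|`. -/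
def dDens (k : ℕ) (F : EE k → ℝ → ℝ) (Y : Set (EE k)) : ℝ :=
  (volume (Y ∩ XF k F)).toReal / (volume Y).toReal

/-- The `C²` distance between two families, measured on `B^k × I`. -/
def famDist (k : ℕ) (F G : EE k → ℝ → ℝ) : ℝ :=
  sSup ((fun q => ∑ i ∈ Finset.range 3,
      ‖iteratedFDeriv ℝ i (uncurryF F) q - iteratedFDeriv ℝ i (uncurryF G) q‖) ''
    (pBall k ×ˢ II))

/-- `liminf_{ε→0⁺} g(ε)`. -/
def liminfSmall (g : ℝ → ℝ) : ℝ :=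
  ⨆ η ∈ Set.Ioi (0 : ℝ), sInf (g '' Set.Ioo 0 η)

/-- `D^-(F,p)`: the liminf, over `C²` families `F̂ → F` fixing `f̂_p = f_p`, of
`liminf_{ε→0} d(F̂, B_ε(p))`. -/
def Dminus (k : ℕ) (F : EE k → ℝ → ℝ) (p : EE k) : ℝ :=
  ⨆ δ ∈ Set.Ioi (0 : ℝ),
    sInf ((fun G => liminfSmall (fun ε => dDens k G (Metric.ball p ε))) ''
      {G | IsC2Fam k G ∧ famDist k F G < δ ∧ G p = F p})

/-- `D^+(F,p) = liminf_{ε→0} liminf_{F̂→F} d(F̂, B_ε(p))`. -/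
def Dplus (k : ℕ) (F : EE k → ℝ → ℝ) (p : EE k) : ℝ :=
  ⨆ η ∈ Set.Ioi (0 : ℝ),
    sInf ((fun ε => ⨆ δ ∈ Set.Ioi (0 : ℝ),
        sInf ((fun G => dDens k G (Metric.ball p ε)) ''
          {G | IsC2Fam k G ∧ famDist k F G < δ})) '' Set.Ioo 0 η)

/-!
Polar coordinates around `p`: for `Y = Xᶜ`, the part of `B_ε(p)` lying in `Y` has measure at
most `ε^(k-1) ∫ |{r ∈ (-ε, ε) : p + r v ∈ Y}| dσ(v)`, the integral running over the unit sphere,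
while `|B_ε(p)| = ε^k |B_1|`. So the relative measure of `Y` in `B_ε(p)` is at most `2 / |B_1|`
times the `σ`-integral of the one-dimensional densities of `Y` along the lines through `p`.
These densities are bounded by `1` and tend to `0` for almost every direction, so dominated
convergence finishes the proof.
-/

open Metric
open scoped ENNReal

namespace MeasureTheory

variable {α : Type*} [MeasurableSpace α] {μ : Measure α}

theorem measure_inter_compl_div_eq_one_sub {s X : Set α} (hX : MeasurableSet X)
    (hs₀ : μ s ≠ 0) (hs : μ s ≠ ∞) :
    μ (s ∩ Xᶜ) / μ s = 1 - μ (s ∩ X) / μ s := by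
  refine ENNReal.eq_sub_of_add_eq (ENNReal.div_ne_top (measure_ne_top_of_subset
    inter_subset_left hs) hs₀) ?_
  rw [ENNReal.div_add_div_same, add_comm, ← sdiff_eq, measure_inter_add_sdiff _ hX,
    ENNReal.div_self hs₀ hs]

theorem tendsto_measure_inter_compl_div_iff {ι : Type*} {l : Filter ι} {s : ι → Set α}
    {X : Set α} (hX : MeasurableSet X) (hs : ∀ᶠ i in l, μ (s i) ≠ 0 ∧ μ (s i) ≠ ∞) :
    Tendsto (fun i => μ (s i ∩ Xᶜ) / μ (s i)) l (𝓝 0) ↔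
      Tendsto (fun i => μ (s i ∩ X) / μ (s i)) l (𝓝 1) := by
  constructor
  · intro h
    have h' := ENNReal.Tendsto.sub tendsto_const_nhds h (Or.inl ENNReal.one_ne_top)
    rw [tsub_zero] at h'
    refine h'.congr' (hs.mono fun i hi => ?_)
    rw [← measure_inter_compl_div_eq_one_sub hX.compl hi.1 hi.2, compl_compl]
  · intro h
    have h' := ENNReal.Tendsto.sub tendsto_const_nhds h (Or.inl ENNReal.one_ne_top)
    rw [tsub_self] at h'
    exact h'.congr' (hs.mono fun i hi => (measure_inter_compl_div_eq_one_sub hX hi.1 hi.2).symm)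

end MeasureTheory

namespace MeasureTheory.Measure

theorem volumeIoiPow_le_of_forall_le (n : ℕ) {ε : ℝ} {A : Set (Ioi (0 : ℝ))}
    (hA : MeasurableSet A) (hle : ∀ r ∈ A, (r : ℝ) ≤ ε) :
    volumeIoiPow n A ≤ ENNReal.ofReal (ε ^ n) * volume (Subtype.val '' A) := by
  rw [volumeIoiPow, withDensity_apply _ hA, ← comap_subtype_coe_apply measurableSet_Ioi,
    ← setLIntegral_const]
  exact setLIntegral_mono measurable_const fun r hr =>
    ENNReal.ofReal_le_ofReal (pow_le_pow_left₀ r.2.out.le (hle r hr) n)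

variable {E : Type*} [NormedAddCommGroup E] [NormedSpace ℝ E] [FiniteDimensional ℝ E]
  [MeasurableSpace E] [BorelSpace E] [Nontrivial E] (μ : Measure E) [μ.IsAddHaarMeasure]

theorem measure_eq_lintegral_toSphere {S : Set E} (hS : MeasurableSet S) :
    μ S = ∫⁻ v, volumeIoiPow (Module.finrank ℝ E - 1) {r | (r : ℝ) • (v : E) ∈ S}
      ∂μ.toSphere := by
  set e := homeomorphUnitSphereProd E
  have hT : MeasurableSet (e.symm ⁻¹' (Subtype.val ⁻¹' S)) :=
    (hS.preimage measurable_subtype_coe).preimage e.symm.measurable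
  have hpolar := (measurePreserving_homeomorphUnitSphereProd μ).measure_preimage
    hT.nullMeasurableSet
  rw [show e ⁻¹' (e.symm ⁻¹' _) = _ from e.toEquiv.preimage_symm_preimage _,
    Measure.prod_apply hT, comap_subtype_coe_apply (measurableSet_singleton 0).compl,
    Subtype.image_preimage_coe, inter_comm, ← sdiff_eq,
    measure_sdiff_null (measure_singleton 0)] at hpolar
  exact hpolar

theorem measure_closedBall_inter_le_lintegral_toSphere {Y : Set E} (hY : MeasurableSet Y)
    (p : E) (ε : ℝ) :
    μ (closedBall p ε ∩ Y) ≤ ENNReal.ofReal (ε ^ (Module.finrank ℝ E - 1)) *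
      ∫⁻ v, volume {r ∈ Ioo (-ε) ε | p + r • (v : E) ∈ Y} ∂μ.toSphere := by
  have hS : MeasurableSet ((p + ·) ⁻¹' (closedBall p ε ∩ Y)) :=
    (measurableSet_closedBall.inter hY).preimage (measurable_const_add p)
  rw [← measure_preimage_add μ p, measure_eq_lintegral_toSphere μ hS,
    ← lintegral_const_mul' _ _ ENNReal.ofReal_ne_top]
  refine lintegral_mono fun v => ?_
  have hv : ‖(v : E)‖ = 1 := mem_sphere_zero_iff_norm.1 v.2
  set A := {r : Ioi (0 : ℝ) | (r : ℝ) • (v : E) ∈ (p + ·) ⁻¹' (closedBall p ε ∩ Y)}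
  have hA_le : ∀ r ∈ A, (r : ℝ) ≤ ε := fun r hr => by
    simpa [A, dist_eq_norm, norm_smul, hv, abs_of_pos r.2.out] using hr.1
  have hA_sub : Subtype.val '' A ⊆ insert ε {r ∈ Ioo (-ε) ε | p + r • (v : E) ∈ Y} := by
    rintro _ ⟨r, hr, rfl⟩
    rcases (hA_le r hr).eq_or_lt with h | h
    · exact Or.inl h
    · exact Or.inr ⟨⟨by linarith [r.2.out], h⟩, hr.2⟩
  calc volumeIoiPow (Module.finrank ℝ E - 1) A
      ≤ ENNReal.ofReal (ε ^ (Module.finrank ℝ E - 1)) * volume (Subtype.val '' A) :=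
        volumeIoiPow_le_of_forall_le _ (hS.preimage (measurable_subtype_coe.smul_const _)) hA_le
    _ ≤ _ := mul_le_mul_right ((measure_mono hA_sub).trans_eq
        (measure_congr (insert_ae_eq_self (μ := volume) _ _))) _

end MeasureTheory.Measure

section lineDensity

variable {E : Type*} [NormedAddCommGroup E] [NormedSpace ℝ E]

def lineDensity (Y : Set E) (p v : E) (ε : ℝ) : ℝ≥0∞ :=
  volume {r ∈ Ioo (-ε) ε | p + r • v ∈ Y} / volume (Ioo (-ε) ε)

theorem lineDensity_le_one (Y : Set E) (p v : E) (ε : ℝ) : lineDensity Y p v ε ≤ 1 :=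
  ENNReal.div_le_of_le_mul <|
    (one_mul (volume (Ioo (-ε) ε))).symm ▸ measure_mono (sep_subset _ _)

variable [MeasurableSpace E] [BorelSpace E]

theorem tendsto_lineDensity_compl {Y : Set E} (hY : MeasurableSet Y) (p v : E)
    (h : Tendsto (lineDensity Y p v) (𝓝[>] 0) (𝓝 1)) :
    Tendsto (lineDensity Yᶜ p v) (𝓝[>] 0) (𝓝 0) :=
  (tendsto_measure_inter_compl_div_iff (hY.preimage (by fun_prop)) <|
    eventually_nhdsWithin_of_forall fun ε (hε : 0 < ε) => ⟨by simpa using hε, by simp⟩).2 h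

theorem measurable_lineDensity [SecondCountableTopology E] {Y : Set E} (hY : MeasurableSet Y)
    (p : E) (ε : ℝ) : Measurable fun v => lineDensity Y p v ε := by
  have hW : MeasurableSet {z : E × ℝ | z.2 ∈ Ioo (-ε) ε ∧ p + z.2 • z.1 ∈ Y} :=
    (measurable_snd measurableSet_Ioo).inter (hY.preimage (by fun_prop))
  exact (measurable_measure_prodMk_left hW).div_const _

variable [FiniteDimensional ℝ E] [Nontrivial E] (μ : Measure E) [μ.IsAddHaarMeasure]

theorem measure_closedBall_inter_div_le {Y : Set E} (hY : MeasurableSet Y) (p : E) {ε : ℝ}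
    (hε : 0 < ε) :
    μ (closedBall p ε ∩ Y) / μ (closedBall p ε) ≤
      2 / μ (ball 0 1) * ∫⁻ v, lineDensity Y p v ε ∂μ.toSphere := by
  set d := Module.finrank ℝ E
  set c := μ (ball 0 1)
  have hc₀ : c ≠ 0 := (measure_ball_pos μ _ one_pos).ne'
  have hc : c ≠ ∞ := measure_ball_lt_top.ne
  have hIoo : volume (Ioo (-ε) ε) = ENNReal.ofReal (2 * ε) := by
    rw [Real.volume_Ioo]; ring_nf
  have hline : ∫⁻ v, volume {r ∈ Ioo (-ε) ε | p + r • (v : E) ∈ Y} ∂μ.toSphere =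
      (∫⁻ v, lineDensity Y p v ε ∂μ.toSphere) * ENNReal.ofReal (2 * ε) := by
    rw [← lintegral_mul_const' _ _ ENNReal.ofReal_ne_top]
    refine lintegral_congr fun v => ?_
    rw [lineDensity, hIoo, ENNReal.div_mul_cancel (by simpa using hε) ENNReal.ofReal_ne_top]
  have hpow :
      ENNReal.ofReal (ε ^ (d - 1)) * ENNReal.ofReal (2 * ε) = 2 * ENNReal.ofReal (ε ^ d) := by
    rw [← ENNReal.ofReal_mul (by positivity), ← ENNReal.ofReal_ofNat 2,
      ← ENNReal.ofReal_mul zero_le_two]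
    congr 1
    rw [mul_left_comm, ← pow_succ, Nat.sub_add_cancel Module.finrank_pos]
  rw [Measure.addHaar_closedBall μ p hε.le]
  refine ENNReal.div_le_of_le_mul ?_
  calc μ (closedBall p ε ∩ Y)
      ≤ ENNReal.ofReal (ε ^ (d - 1)) *
          ∫⁻ v, volume {r ∈ Ioo (-ε) ε | p + r • (v : E) ∈ Y} ∂μ.toSphere :=
        μ.measure_closedBall_inter_le_lintegral_toSphere hY p ε
    _ = 2 / c * (∫⁻ v, lineDensity Y p v ε ∂μ.toSphere) *
          (ENNReal.ofReal (ε ^ d) * c) := by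
        rw [hline, mul_left_comm, hpow, ← mul_one (_ * (2 * _)),
          ← ENNReal.inv_mul_cancel hc₀ hc, ENNReal.div_eq_inv_mul]
        ring

theorem tendsto_measure_closedBall_inter_div_zero {Y : Set E} (hY : MeasurableSet Y) (p : E)
    (h : ∀ᵐ v : sphere (0 : E) 1 ∂μ.toSphere,
      Tendsto (lineDensity Y p v) (𝓝[>] 0) (𝓝 0)) :
    Tendsto (fun ε => μ (closedBall p ε ∩ Y) / μ (closedBall p ε)) (𝓝[>] 0) (𝓝 0) := by
  have hint :
      Tendsto (fun ε => ∫⁻ v, lineDensity Y p v ε ∂μ.toSphere) (𝓝[>] 0) (𝓝 0) := by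
    simpa using tendsto_lintegral_filter_of_dominated_convergence (fun _ => 1)
      (Eventually.of_forall fun ε => (measurable_lineDensity hY p ε).comp measurable_subtype_coe)
      (Eventually.of_forall fun ε => ae_of_all _ fun v => lineDensity_le_one _ _ _ _)
      (by simpa using measure_ne_top μ.toSphere univ) h
  have hc : 2 / μ (ball 0 1) ≠ ∞ :=
    ENNReal.div_ne_top ENNReal.ofNat_ne_top (measure_ball_pos μ _ one_pos).ne'
  refine tendsto_of_tendsto_of_tendsto_of_le_of_le' tendsto_const_nhds
    (by simpa using ENNReal.Tendsto.const_mul hint (Or.inr hc))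
    (Eventually.of_forall fun _ => zero_le) ?_
  filter_upwards [self_mem_nhdsWithin] with ε hε
    using measure_closedBall_inter_div_le μ hY p hε

end lineDensity

theorem density_along_lines_general (k : ℕ) (hk : 1 ≤ k) (X : Set (EE k))
    (hX : MeasurableSet X) (p : EE k)
    (h : ∀ᵐ v ∂((volume : Measure (EE k)).toSphere),
      DensityAlong k X p v.val) :
    DensityPtK k X p := by
  have : Nontrivial (EE k) :=
    Module.nontrivial_of_finrank_pos (R := ℝ) (by rwa [finrank_euclideanSpace_fin])
  have hline : ∀ᵐ v : sphere (0 : EE k) 1 ∂(volume : Measure (EE k)).toSphere,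
      Tendsto (lineDensity Xᶜ p v) (𝓝[>] 0) (𝓝 0) :=
    -- `DensityAlong k X p v` unfolds to `Tendsto (lineDensity X p v) (𝓝[>] 0) (𝓝 1)`.
    h.mono fun v => tendsto_lineDensity_compl hX p v
  have hcompl := tendsto_measure_closedBall_inter_div_zero volume hX.compl p hline
  simp_rw [DensityPtK, inter_comm X]
  refine (tendsto_measure_inter_compl_div_iff hX ?_).1 hcompl
  exact eventually_nhdsWithin_of_forall fun ε (hε : 0 < ε) =>
    ⟨(measure_closedBall_pos volume p hε).ne', measure_closedBall_lt_top.ne⟩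

/-- If `p` is a density point of a measurable set `X ⊆ B^k` along
almost every line through `p` (equivalently, for almost every direction on the unit
sphere, with respect to the natural measure), then `p` is a Lebesgue density point
of `X` in `ℝ^k`. -/
theorem density_along_lines (k : ℕ) (hk : 1 ≤ k) (X : Set (EE k))
    (hX : MeasurableSet X) (hXB : X ⊆ pBall k) (p : EE k) (hp : p ∈ pBall k)
    (h : ∀ᵐ v ∂((volume : Measure (EE k)).toSphere),
      DensityAlong k X p v.val) :
    DensityPtK k X p :=
  density_along_lines_general k hk X hX p h

end
end

section
/- Let f be a unimodal map (with critical point 0) satisfying the summability condition Σ_{k=0}^∞ 1/|Df^k(f(0))| < ∞. Then there exists an even polynomial vector field v on I with v(−1) = v(1) = 0 such that ν_f(v) = Σ_{k=0}^∞ v(f^k(0))/Df^k(f(0)) ≠ 0 (the series converging absolutely). -/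
open MeasureTheory Set Filter Topology Function

noncomputable section

/-! The vector fields `v_N = (1 - x²)^N` are even and vanish at `±1`. Along the orbit of the
critical point they tend to `1` where `f^k(0) = 0` and to `0` elsewhere in `I`, and they are
bounded by `1`, so by dominated convergence (the summability condition) `ν_f(v_N)` tends to the
sum of `1/Df^k(f(0))` over those `k` with `f^k(0) = 0`. Only `k = 0` contributes: for `k ≥ 1` the
chain rule puts the factor `Df(0) = 0` into `Df^k(f(0))`, and `0⁻¹ = 0`. Hence `ν_f(v_N) → 1`. -/

open Polynomial

theorem abs_one_sub_sq_pow_le_one {x : ℝ} (hx : |x| ≤ 1) (N : ℕ) : |(1 - x ^ 2) ^ N| ≤ 1 := by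
  have hx2 : x ^ 2 ≤ 1 := sq_le_one_iff_abs_le_one x |>.mpr hx
  rw [abs_pow]
  exact pow_le_one₀ (abs_nonneg _)
    (abs_le.mpr ⟨by linarith [sq_nonneg x], by linarith [sq_nonneg x]⟩)

theorem abs_one_sub_sq_pow_mul_le {x : ℝ} (hx : |x| ≤ 1) (N : ℕ) (w : ℝ) :
    |(1 - x ^ 2) ^ N * w| ≤ |w| := by
  rw [abs_mul]
  exact mul_le_of_le_one_left (abs_nonneg w) (abs_one_sub_sq_pow_le_one hx N)

theorem tendsto_one_sub_sq_pow {x : ℝ} (hx : |x| ≤ 1) :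
    Tendsto (fun N : ℕ => (1 - x ^ 2) ^ N) atTop (𝓝 (if x = 0 then 1 else 0)) := by
  split_ifs with h
  · simp [h]
  · have hx2 : x ^ 2 ≤ 1 := sq_le_one_iff_abs_le_one x |>.mpr hx
    have hpos : 0 < x ^ 2 := by positivity
    exact tendsto_pow_atTop_nhds_zero_of_abs_lt_one (abs_lt.mpr ⟨by linarith, by linarith⟩)

theorem summable_abs_one_sub_sq_pow_mul {x w : ℕ → ℝ} (hx : ∀ k, |x k| ≤ 1)
    (hw : Summable fun k => |w k|) (N : ℕ) :
    Summable fun k => |(1 - x k ^ 2) ^ N * w k| :=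
  hw.of_nonneg_of_le (fun _ => abs_nonneg _) fun k => abs_one_sub_sq_pow_mul_le (hx k) N (w k)

theorem tendsto_tsum_one_sub_sq_pow_mul {x w : ℕ → ℝ} (hx : ∀ k, |x k| ≤ 1)
    (hw : Summable fun k => |w k|) :
    Tendsto (fun N : ℕ => ∑' k, (1 - x k ^ 2) ^ N * w k) atTop
      (𝓝 (∑' k, if x k = 0 then w k else 0)) := by
  refine tendsto_tsum_of_dominated_convergence hw (fun k => ?_)
    (.of_forall fun N k => abs_one_sub_sq_pow_mul_le (hx k) N (w k))
  simpa [ite_mul] using (tendsto_one_sub_sq_pow (hx k)).mul_const (w k)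

theorem deriv_iterate_succ_eq_zero {𝕜 : Type*} [NontriviallyNormedField 𝕜] {f : 𝕜 → 𝕜}
    (hf : Differentiable 𝕜 f) {c y : 𝕜} (hc : deriv f c = 0) {n : ℕ} (hy : f^[n] y = c) :
    deriv (f^[n + 1]) y = 0 := by
  rw [iterate_succ', deriv_comp y hf.differentiableAt ((hf.iterate n).differentiableAt), hy, hc,
    zero_mul]

namespace IsUnimodal

variable {f : ℝ → ℝ}

theorem abs_iterate_zero_le_one (hf : IsUnimodal f) (k : ℕ) : |f^[k] 0| ≤ 1 :=
  abs_le.mpr (hf.mapsTo.iterate k ⟨by norm_num, by norm_num⟩)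

theorem deriv_iterate_eq_zero_of_iterate_eq_zero (hf : IsUnimodal f) {k : ℕ} (hk : k ≠ 0)
    (h0 : f^[k] 0 = 0) : deriv (f^[k]) (f 0) = 0 := by
  obtain ⟨n, rfl⟩ := Nat.exists_eq_succ_of_ne_zero hk
  exact deriv_iterate_succ_eq_zero (hf.smooth.differentiable (by norm_num)) hf.critical
    (by rwa [← iterate_succ_apply])

end IsUnimodal

/-- For a unimodal map satisfying the summability condition
`Σ 1/|Df^k(f(0))| < ∞` there is an even polynomial vector field `v`, vanishing at `±1`,
with `ν_f(v) = Σ v(f^k(0))/Df^k(f(0)) ≠ 0` (the series converging absolutely). -/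
theorem exists_transverse_vector_field (f : ℝ → ℝ) (hf : IsUnimodal f)
    (hsum : Summable fun k : ℕ => 1 / |deriv (f^[k]) (f 0)|) :
    ∃ p : Polynomial ℝ, (∀ x : ℝ, p.eval (-x) = p.eval x) ∧
      p.eval (-1) = 0 ∧ p.eval 1 = 0 ∧
      Summable (fun k : ℕ => |p.eval (f^[k] 0) / deriv (f^[k]) (f 0)|) ∧
      (∑' k : ℕ, p.eval (f^[k] 0) / deriv (f^[k]) (f 0)) ≠ 0 := by
  set w : ℕ → ℝ := fun k => (deriv (f^[k]) (f 0))⁻¹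
  have hx := hf.abs_iterate_zero_le_one
  have hw : Summable fun k => |w k| := by simpa [w] using hsum
  have hlim := tendsto_tsum_one_sub_sq_pow_mul hx hw
  have hlim_eq : (∑' k, if f^[k] 0 = 0 then w k else 0) = 1 := by
    rw [tsum_eq_single 0 fun k hk => by
      simpa [w] using hf.deriv_iterate_eq_zero_of_iterate_eq_zero hk]
    simp [w]
  rw [hlim_eq] at hlim
  obtain ⟨N, hN, hN1⟩ := ((hlim.eventually_ne one_ne_zero).and (eventually_ge_atTop 1)).exists
  have hN0 : N ≠ 0 := by omega
  refine ⟨(1 - X ^ 2) ^ N, fun x => by simp, by simp [hN0], by simp [hN0], ?_, ?_⟩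
  · simpa [w, div_eq_mul_inv] using summable_abs_one_sub_sq_pow_mul hx hw N
  · simpa [div_eq_mul_inv] using hN

end
end

section
/- Let F : (−ε, ε) × I → ℝ be a C¹ map, write f_t = F(t, ·), f = f_0, and v = (∂/∂t) f_t |_{t=0}. Fix n ≥ 0 and assume f^k(0) ∈ I and Df^k(f(0)) ≠ 0 for 0 ≤ k ≤ n (and that all iterates appearing are defined). Then the derivative of the critical orbit with respect to the parameter satisfies (d/dt) f_t^{n+1}(0) |_{t=0} = Df^n(f(0)) · Σ_{k=0}^n v(f^k(0))/Df^k(f(0)), where Df^0 = 1. -/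
open MeasureTheory Set Filter Topology Function

noncomputable section

/-
Differentiating `f_t^{m+2}(0) = f_t(f_t^{m+1}(0))` in `t` gives the recursion
`a_{m+1} = v(f^{m+1}(0)) + Df(f^{m+1}(0)) · a_m` for `a_m = (d/dt) f_t^{m+1}(0)`, while the
chain rule gives `Df^{m+1}(f(0)) = Df(f^{m+1}(0)) · Df^m(f(0))`. Dividing the recursion by
`Df^{m+1}(f(0)) ≠ 0` turns it into a telescoping sum.
-/

theorem deriv_iterate_succ {𝕜 : Type*} [NontriviallyNormedField 𝕜] {f : 𝕜 → 𝕜}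
    (hf : Differentiable 𝕜 f) (m : ℕ) (x : 𝕜) :
    deriv f^[m + 1] x = deriv f (f^[m] x) * deriv f^[m] x := by
  rw [iterate_succ']
  exact deriv_comp x (hf _) ((hf.iterate m) x)

section ParameterFamily

variable {F : ℝ → ℝ → ℝ} {t₀ : ℝ}

theorem Differentiable.slice (hF : Differentiable ℝ (fun q : ℝ × ℝ => F q.1 q.2)) (t : ℝ) :
    Differentiable ℝ (F t) := fun x =>
  (hF (t, x)).comp x (differentiableAt_const t |>.prodMk differentiableAt_id)

theorem hasDerivAt_family_apply {g : ℝ → ℝ} {d : ℝ}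
    (hF : DifferentiableAt ℝ (fun q : ℝ × ℝ => F q.1 q.2) (t₀, g t₀))
    (hg : HasDerivAt g d t₀) :
    HasDerivAt (fun t => F t (g t))
      (deriv (fun t => F t (g t₀)) t₀ + deriv (F t₀) (g t₀) * d) t₀ := by
  set L := fderiv ℝ (fun q : ℝ × ℝ => F q.1 q.2) (t₀, g t₀)
  have hL := hF.hasFDerivAt
  have ht : HasDerivAt (fun t => F t (g t₀)) (L (1, 0)) t₀ :=
    (hL.comp_hasDerivAt t₀ ((hasDerivAt_id t₀).prodMk (hasDerivAt_const t₀ (g t₀))) :)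
  have hx : HasDerivAt (F t₀) (L (0, 1)) (g t₀) :=
    (hL.comp_hasDerivAt (g t₀) ((hasDerivAt_const (g t₀) t₀).prodMk (hasDerivAt_id _)) :)
  have hsplit : L (1, d) = L (1, 0) + L (0, 1) * d := by
    rw [show ((1 : ℝ), d) = (1, 0) + d • (0, 1) by simp, map_add, map_smul, smul_eq_mul, mul_comm]
  rw [ht.deriv, hx.deriv, ← hsplit]
  exact (hL.comp_hasDerivAt t₀ ((hasDerivAt_id t₀).prodMk hg) :)

theorem hasDerivAt_iterate_family (hF : Differentiable ℝ (fun q : ℝ × ℝ => F q.1 q.2))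
    (x₀ : ℝ) (n : ℕ) (hD : ∀ k ≤ n, deriv (F t₀)^[k] (F t₀ x₀) ≠ 0) :
    HasDerivAt (fun t => (F t)^[n + 1] x₀)
      (deriv (F t₀)^[n] (F t₀ x₀) * ∑ k ∈ Finset.range (n + 1),
        deriv (fun t => F t ((F t₀)^[k] x₀)) t₀ / deriv (F t₀)^[k] (F t₀ x₀)) t₀ := by
  induction n with
  | zero => simpa using hasDerivAt_family_apply (hF _) (hasDerivAt_const t₀ x₀)
  | succ m ih =>
    have hstep := hasDerivAt_family_apply (hF _) (ih fun k hk => hD k (hk.trans m.le_succ))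
    simp only [← iterate_succ_apply' (F _)] at hstep
    convert hstep using 1
    have hchain := deriv_iterate_succ (hF.slice t₀) m (F t₀ x₀)
    rw [← iterate_succ_apply] at hchain
    have hnz : deriv (F t₀)^[m + 1] (F t₀ x₀) ≠ 0 := hD (m + 1) le_rfl
    rw [Finset.sum_range_succ, mul_add, mul_div_cancel₀ _ hnz, hchain]
    ring

end ParameterFamily

theorem parameter_derivative_formula_general (F : ℝ → ℝ → ℝ)
    (hF : ContDiff ℝ 1 (fun q : ℝ × ℝ => F q.1 q.2)) (n : ℕ)
    (hD : ∀ k ≤ n, deriv ((F 0)^[k]) (F 0 0) ≠ 0) :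
    deriv (fun t => (F t)^[n + 1] 0) 0 =
      deriv ((F 0)^[n]) (F 0 0) *
        ∑ k ∈ Finset.range (n + 1),
          deriv (fun t => F t ((F 0)^[k] 0)) 0 / deriv ((F 0)^[k]) (F 0 0) :=
  (hasDerivAt_iterate_family (hF.differentiable one_ne_zero) 0 n hD).deriv

/-- For a `C¹` family `f_t = F(t,·)` with `f = f_0` and
`v = (∂/∂t)f_t|_{t=0}`, the derivative of the critical orbit with respect to the
parameter satisfies
`(d/dt) f_t^{n+1}(0)|_{t=0} = Df^n(f(0)) · Σ_{k=0}^n v(f^k(0))/Df^k(f(0))`. -/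
theorem parameter_derivative_formula (F : ℝ → ℝ → ℝ)
    (hF : ContDiff ℝ 1 (fun q : ℝ × ℝ => F q.1 q.2)) (n : ℕ)
    (hI : ∀ k ≤ n, (F 0)^[k] 0 ∈ II)
    (hD : ∀ k ≤ n, deriv ((F 0)^[k]) (F 0 0) ≠ 0) :
    deriv (fun t => (F t)^[n + 1] 0) 0 =
      deriv ((F 0)^[n]) (F 0 0) *
        ∑ k ∈ Finset.range (n + 1),
          deriv (fun t => F t ((F 0)^[k] 0)) 0 / deriv ((F 0)^[k]) (F 0 0) :=
  parameter_derivative_formula_general F hF n hD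

end
end

section
/- Let X ⊂ ℝ be a measurable set such that for each x ∈ X there is a sequence D_n(x) of nested intervals containing x and converging to x (their lengths tend to 0), with the property that for all x₁, x₂ ∈ X and all n, the intervals D_n(x₁) and D_n(x₂) are either equal or disjoint. Let Q_n ⊂ ℝ be measurable sets and set q_n(x) = |Q_n ∩ D_n(x)| / |D_n(x)|. Let Y be the set of x ∈ X which belong to only finitely many of the sets Q_n. If Σ_n q_n(x) < ∞ for almost every x ∈ X, then |Y| = |X|, i.e. almost every point of X lies in only finitely many Q_n. -/
open MeasureTheory Set Filter Topology Function

noncomputable section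

/-!
Let `q_n` be the average of `Q_n` over the interval of level `n` containing a point. Fix a
measurable `s ⊆ X` on which `∑ q_n` is bounded. By the Lebesgue density theorem, almost every
`x ∈ s` eventually lies in intervals `D_n(x)` of which `s` fills at least half, and on such an
interval `D` we have `|Q_n ∩ D| = q_n |D| ≤ 2 ∫_{s ∩ D} q_n`. Since the intervals of level `n`
are disjoint, the part of `Q_n` inside these good intervals has measure at most `2 ∫_s q_n`, and
`∑_n ∫_s q_n < ∞`, so the classical Borel–Cantelli lemma applies to these parts. Countably many
such sets `s` exhaust almost all of `X`.
-/

open scoped ENNReal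

section Partition

variable {α : Type*} [MeasurableSpace α] (μ : Measure α)

-- The paper's `q_n(x)` is `partitionDensity volume (D n '' X) (Q n) x`.
def partitionDensity (P : Set (Set α)) (Q : Set α) (y : α) : ℝ≥0∞ :=
  ∑' I : P, (I : Set α).indicator (fun _ => μ (Q ∩ I) / μ I) y

structure IsBlockFamily (P : Set (Set α)) : Prop where
  countable : P.Countable
  measurableSet : ∀ I ∈ P, MeasurableSet I
  pairwiseDisjoint : P.PairwiseDisjoint id
  measure_ne_top : ∀ I ∈ P, μ I ≠ ∞

variable {μ} {P : Set (Set α)} {Q : Set α}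

theorem measurable_partitionDensity (hP : P.Countable) (hmeas : ∀ I ∈ P, MeasurableSet I) :
    Measurable (partitionDensity μ P Q) :=
  have := hP.to_subtype
  Measurable.tsum fun I => measurable_const.indicator (hmeas I I.2)

theorem partitionDensity_eq_of_mem (hdisj : P.PairwiseDisjoint id) {I : Set α} (hI : I ∈ P) {y : α}
    (hy : y ∈ I) : partitionDensity μ P Q y = μ (Q ∩ I) / μ I := by
  have hzero (J : P) (hJ : J ≠ ⟨I, hI⟩) :
      (J : Set α).indicator (fun _ => μ (Q ∩ J) / μ J) y = 0 :=
    indicator_of_notMem (fun hyJ => hJ (Subtype.ext (hdisj.elim_set J.2 hI y hyJ hy))) _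
  rw [partitionDensity, tsum_eq_single _ hzero, indicator_of_mem hy]

theorem measure_inter_le_mul_setLIntegral_partitionDensity (hdisj : P.PairwiseDisjoint id)
    {I : Set α} (hI : I ∈ P) (hImeas : MeasurableSet I) (hIfin : μ I ≠ ∞) {s : Set α}
    (hs : MeasurableSet s) {c : ℝ≥0∞} (hc : μ I ≤ c * μ (s ∩ I)) :
    μ (Q ∩ I) ≤ c * ∫⁻ y in s ∩ I, partitionDensity μ P Q y ∂μ := by
  rw [setLIntegral_congr_fun (hs.inter hImeas) fun y hy => partitionDensity_eq_of_mem hdisj hI hy.2,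
    setLIntegral_const]
  rcases eq_or_ne (μ I) 0 with hI0 | hI0
  · simp [measure_mono_null inter_subset_right hI0]
  calc μ (Q ∩ I) = μ (Q ∩ I) / μ I * μ I := (ENNReal.div_mul_cancel hI0 hIfin).symm
    _ ≤ μ (Q ∩ I) / μ I * (c * μ (s ∩ I)) := by gcongr
    _ = c * (μ (Q ∩ I) / μ I * μ (s ∩ I)) := by ring

theorem IsBlockFamily.measure_inter_sUnion_le_mul_setLIntegral_partitionDensity
    (hP : IsBlockFamily μ P) {s : Set α} (hs : MeasurableSet s) {c : ℝ≥0∞} {A : Set (Set α)}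
    (hA : A ⊆ P) (hc : ∀ I ∈ A, μ I ≤ c * μ (s ∩ I)) :
    μ (Q ∩ ⋃₀ A) ≤ c * ∫⁻ y in s, partitionDensity μ P Q y ∂μ := by
  have hAcount := hP.countable.mono hA
  calc μ (Q ∩ ⋃₀ A) ≤ ∑' I : A, μ (Q ∩ I) := by
        rw [sUnion_eq_biUnion, inter_iUnion₂]
        exact measure_biUnion_le μ hAcount _
    _ ≤ ∑' I : A, c * ∫⁻ y in s ∩ I, partitionDensity μ P Q y ∂μ :=
        ENNReal.tsum_le_tsum fun I => measure_inter_le_mul_setLIntegral_partitionDensity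
          hP.pairwiseDisjoint (hA I.2) (hP.measurableSet _ (hA I.2)) (hP.measure_ne_top _ (hA I.2))
          hs (hc _ I.2)
    _ = c * ∫⁻ y in ⋃ I ∈ A, s ∩ I, partitionDensity μ P Q y ∂μ := by
        rw [ENNReal.tsum_mul_left, lintegral_biUnion hAcount
          (fun I hI => hs.inter (hP.measurableSet I (hA hI)))
          ((hP.pairwiseDisjoint.subset hA).mono fun I => inter_subset_right)]
    _ ≤ c * ∫⁻ y in s, partitionDensity μ P Q y ∂μ :=
        mul_le_mul_right (lintegral_mono_set (iUnion₂_subset fun I _ => inter_subset_left)) c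

theorem measure_limsup_inter_sUnion_eq_zero {P : ℕ → Set (Set α)}
    (hP : ∀ n, IsBlockFamily μ (P n)) {s : Set α} (hs : MeasurableSet s) {c : ℝ≥0∞} (hc : c ≠ ∞)
    (Q : ℕ → Set α) (hsum : ∑' n, ∫⁻ y in s, partitionDensity μ (P n) (Q n) y ∂μ ≠ ∞) :
    μ (limsup (fun n => Q n ∩ ⋃₀ {I ∈ P n | μ I ≤ c * μ (s ∩ I)}) atTop) = 0 := by
  refine measure_limsup_atTop_eq_zero (ne_top_of_le_ne_top (ENNReal.mul_ne_top hc hsum) ?_)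
  rw [← ENNReal.tsum_mul_left]
  exact ENNReal.tsum_le_tsum fun n =>
    (hP n).measure_inter_sUnion_le_mul_setLIntegral_partitionDensity hs (sep_subset _ _)
      fun _ hI => hI.2

theorem ae_finite_setOf_mem_of_density {P : ℕ → Set (Set α)}
    (hP : ∀ n, IsBlockFamily μ (P n)) {c : ℝ≥0∞} (hc : c ≠ ∞) (Q : ℕ → Set α) {s : ℕ → Set α}
    (hs : ∀ N, MeasurableSet (s N))
    (hsum : ∀ N, ∑' n, ∫⁻ y in s N, partitionDensity μ (P n) (Q n) y ∂μ ≠ ∞)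
    (hdense : ∀ N, ∀ᵐ x ∂μ, x ∈ s N → ∀ᶠ n in atTop, ∃ I ∈ P n, x ∈ I ∧ μ I ≤ c * μ (s N ∩ I)) :
    ∀ᵐ x ∂μ, x ∈ ⋃ N, s N → {n | x ∈ Q n}.Finite := by
  have hnull N := measure_eq_zero_iff_ae_notMem.1
    (measure_limsup_inter_sUnion_eq_zero hP (hs N) hc Q (hsum N))
  filter_upwards [ae_all_iff.2 hdense, ae_all_iff.2 hnull] with x hxdense hxnull hx
  obtain ⟨N, hxs⟩ := mem_iUnion.1 hx
  refine not_not.1 fun hinf => hxnull N (mem_limsup_iff_frequently_mem.2 ?_)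
  refine ((Nat.frequently_atTop_iff_infinite.2 hinf).and_eventually (hxdense N hxs)).mono ?_
  rintro n ⟨hxQ, I, hI, hxI, hIs⟩
  exact ⟨hxQ, I, ⟨hI, hIs⟩, hxI⟩

theorem ae_finite_setOf_mem_of_tsum_ne_top [SigmaFinite μ] {P : ℕ → Set (Set α)}
    (hP : ∀ n, IsBlockFamily μ (P n)) {X : Set α} (hX : MeasurableSet X) {c : ℝ≥0∞} (hc : c ≠ ∞)
    (hdense : ∀ s ⊆ X, MeasurableSet s →
      ∀ᵐ x ∂μ, x ∈ s → ∀ᶠ n in atTop, ∃ I ∈ P n, x ∈ I ∧ μ I ≤ c * μ (s ∩ I))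
    (Q : ℕ → Set α) :
    ∀ᵐ x ∂μ, x ∈ X → ∑' n, partitionDensity μ (P n) (Q n) x ≠ ∞ → {n | x ∈ Q n}.Finite := by
  set q := fun n => partitionDensity μ (P n) (Q n)
  have hq n : Measurable (q n) := measurable_partitionDensity (hP n).countable (hP n).measurableSet
  -- bounded in measure and in `∑ q_n`, so that `∫_{s N} ∑ q_n ≤ N μ (s N) < ∞`
  set s : ℕ → Set α := fun N => X ∩ spanningSets μ N ∩ {x | ∑' n, q n x ≤ N}
  have hs N : MeasurableSet (s N) :=
    (hX.inter (measurableSet_spanningSets μ N)).inter (measurableSet_le (.tsum hq) measurable_const)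
  have hsum N : ∑' n, ∫⁻ y in s N, q n y ∂μ ≠ ∞ := by
    rw [← lintegral_tsum fun n => (hq n).aemeasurable]
    refine ne_top_of_le_ne_top (ENNReal.mul_ne_top (ENNReal.natCast_ne_top N)
      (measure_spanningSets_lt_top μ N).ne) ?_
    calc ∫⁻ y in s N, ∑' n, q n y ∂μ ≤ ∫⁻ _ in s N, (N : ℝ≥0∞) ∂μ :=
          setLIntegral_mono measurable_const fun y hy => hy.2
      _ ≤ N * μ (spanningSets μ N) := by
          rw [setLIntegral_const]; gcongr; exact fun y hy => hy.1.2
  filter_upwards [ae_finite_setOf_mem_of_density hP hc Q hs hsum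
    fun N => hdense (s N) (fun x hx => hx.1.1) (hs N)] with x hx hxX hfin
  obtain ⟨N, hN⟩ := ENNReal.exists_nat_gt hfin
  refine hx (mem_iUnion.2 ⟨max N (spanningSetsIndex μ x), ⟨hxX, ?_⟩, ?_⟩)
  · exact monotone_spanningSets μ (le_max_right _ _) (mem_spanningSetsIndex μ x)
  · exact hN.le.trans (by exact_mod_cast le_max_left _ _)

end Partition

theorem ae_eventually_volume_le_two_mul_volume_inter (s : Set ℝ) :
    ∀ᵐ x, x ∈ s → ∀ {ι : Type*} {l : Filter ι} (I : ι → Set ℝ),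
      (∀ i, ∃ u v, u < v ∧ I i = Icc u v) → (∀ i, x ∈ I i) →
      Tendsto (fun i => volume (I i)) l (𝓝 0) →
      ∀ᶠ i in l, volume (I i) ≤ 2 * volume (s ∩ I i) := by
  filter_upwards [ae_imp_of_ae_restrict
      (IsUnifLocDoublingMeasure.ae_tendsto_measure_inter_div volume s 1)]
    with x hx hxs ι l I hI hxI hlim
  choose u v huv hIeq using hI
  have hball i : I i = Metric.closedBall ((u i + v i) / 2) ((v i - u i) / 2) := by
    rw [hIeq, Real.closedBall_eq_Icc]; congr 1 <;> ring
  have hlen : Tendsto (fun i => v i - u i) l (𝓝 0) := by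
    have := (ENNReal.tendsto_toReal ENNReal.zero_ne_top).comp hlim
    simpa [comp_def, hIeq, Real.volume_Icc, (huv _).le] using this
  have hδ : Tendsto (fun i => (v i - u i) / 2) l (𝓝[>] 0) := by
    refine tendsto_nhdsWithin_iff.2 ⟨by simpa using hlen.div_const 2, .of_forall fun i => ?_⟩
    simpa using huv i
  have hratio := hx hxs _ _ hδ (.of_forall fun i => by rw [one_mul, ← hball]; exact hxI i)
  simp only [← hball] at hratio
  filter_upwards [hratio.eventually (lt_mem_nhds (ENNReal.inv_lt_one.2 ENNReal.one_lt_two))]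
    with i hi
  calc volume (I i) = 2 * (2⁻¹ * volume (I i)) := by
        rw [← mul_assoc, ENNReal.mul_inv_cancel two_ne_zero ENNReal.ofNat_ne_top, one_mul]
    _ ≤ 2 * volume (s ∩ I i) := by
        gcongr; exact (ENNReal.mul_lt_of_lt_div hi).le

theorem pairwiseDisjoint_image_of_eq_or_disjoint {α β : Type*} {D : β → Set α} {X : Set β}
    (h : ∀ x₁ ∈ X, ∀ x₂ ∈ X, D x₁ = D x₂ ∨ Disjoint (D x₁) (D x₂)) :
    (D '' X).PairwiseDisjoint id := by
  rintro _ ⟨x₁, hx₁, rfl⟩ _ ⟨x₂, hx₂, rfl⟩ hne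
  exact (h x₁ hx₁ x₂ hx₂).resolve_left hne

theorem isBlockFamily_image_Icc {β : Type*} {D : β → Set ℝ} {X : Set β}
    (hIcc : ∀ x ∈ X, ∃ u v, u < v ∧ D x = Icc u v)
    (hdisj : ∀ x₁ ∈ X, ∀ x₂ ∈ X, D x₁ = D x₂ ∨ Disjoint (D x₁) (D x₂)) :
    IsBlockFamily volume (D '' X) where
  countable := (pairwiseDisjoint_image_of_eq_or_disjoint hdisj).countable_of_nonempty_interior
    (by rintro _ ⟨x, hx, rfl⟩; obtain ⟨u, v, huv, hD⟩ := hIcc x hx; simpa [hD] using huv)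
  measurableSet := by
    rintro _ ⟨x, hx, rfl⟩; obtain ⟨u, v, -, hD⟩ := hIcc x hx; simp [hD]
  pairwiseDisjoint := pairwiseDisjoint_image_of_eq_or_disjoint hdisj
  measure_ne_top := by
    rintro _ ⟨x, hx, rfl⟩; obtain ⟨u, v, -, hD⟩ := hIcc x hx; simp [hD]

theorem ENNReal.tsum_ne_top_of_summable_toReal {ι : Type*} {f : ι → ℝ≥0∞} (hf : ∀ i, f i ≠ ∞)
    (hsum : Summable fun i => (f i).toReal) : ∑' i, f i ≠ ∞ := by
  simpa [ENNReal.ofReal_toReal (hf _)] using hsum.tsum_ofReal_ne_top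

theorem borel_cantelli_intervals_general (X : Set ℝ) (hX : MeasurableSet X)
    (D : ℕ → ℝ → Set ℝ)
    (hmem : ∀ x ∈ X, ∀ n, x ∈ D n x)
    (hint : ∀ x ∈ X, ∀ n, ∃ u v : ℝ, u < v ∧ D n x = Set.Icc u v)
    (hconv : ∀ x ∈ X, Tendsto (fun n => volume (D n x)) atTop (nhds 0))
    (hdisj : ∀ x₁ ∈ X, ∀ x₂ ∈ X, ∀ n, D n x₁ = D n x₂ ∨ Disjoint (D n x₁) (D n x₂))
    (Q : ℕ → Set ℝ)
    (hsum : ∀ᵐ x, x ∈ X → Summable (fun n : ℕ =>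
      (volume (Q n ∩ D n x)).toReal / (volume (D n x)).toReal)) :
    volume {x ∈ X | {n : ℕ | x ∈ Q n}.Infinite} = 0 := by
  have hP n : IsBlockFamily volume (D n '' X) :=
    isBlockFamily_image_Icc (fun x hx => hint x hx n) fun x₁ h₁ x₂ h₂ => hdisj x₁ h₁ x₂ h₂ n
  have hq {x} (hx : x ∈ X) n :
      partitionDensity volume (D n '' X) (Q n) x = volume (Q n ∩ D n x) / volume (D n x) :=
    partitionDensity_eq_of_mem (hP n).pairwiseDisjoint (mem_image_of_mem _ hx) (hmem x hx n)
  have hdense : ∀ s ⊆ X, MeasurableSet s → ∀ᵐ x, x ∈ s →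
      ∀ᶠ n in atTop, ∃ I ∈ D n '' X, x ∈ I ∧ volume I ≤ 2 * volume (s ∩ I) := by
    intro s hsX _
    filter_upwards [ae_eventually_volume_le_two_mul_volume_inter s] with x hx hxs
    have hxX := hsX hxs
    exact (hx hxs _ (hint x hxX) (hmem x hxX) (hconv x hxX)).mono fun n hn =>
      ⟨D n x, mem_image_of_mem _ hxX, hmem x hxX n, hn⟩
  rw [measure_eq_zero_iff_ae_notMem]
  filter_upwards [hsum, ae_finite_setOf_mem_of_tsum_ne_top hP hX ENNReal.ofNat_ne_top hdense Q]
    with x hx hfin ⟨hxX, hinf⟩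
  refine hinf (hfin hxX (ENNReal.tsum_ne_top_of_summable_toReal (fun n => ?_) ?_))
  · rw [hq hxX]
    exact ne_top_of_le_ne_top ENNReal.one_ne_top
      (ENNReal.div_le_of_le_mul (by rw [one_mul]; exact measure_mono inter_subset_right))
  · simpa only [hq hxX, ENNReal.toReal_div] using hx hxX

/-- a Borel-Cantelli type lemma. Given nested intervals `D_n(x)`
shrinking to each `x ∈ X`, equal or disjoint for different points of `X`, and measurable
sets `Q_n` with `q_n(x) = |Q_n ∩ D_n(x)|/|D_n(x)|` satisfying `Σ q_n(x) < ∞` a.e. on `X`,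
almost every point of `X` belongs to only finitely many `Q_n`. -/
theorem borel_cantelli_intervals (X : Set ℝ) (hX : MeasurableSet X)
    (D : ℕ → ℝ → Set ℝ)
    (hmem : ∀ x ∈ X, ∀ n, x ∈ D n x)
    (hint : ∀ x ∈ X, ∀ n, ∃ u v : ℝ, u < v ∧ D n x = Set.Icc u v)
    (hnest : ∀ x ∈ X, ∀ n, D (n + 1) x ⊆ D n x)
    (hconv : ∀ x ∈ X, Tendsto (fun n => volume (D n x)) atTop (nhds 0))
    (hdisj : ∀ x₁ ∈ X, ∀ x₂ ∈ X, ∀ n, D n x₁ = D n x₂ ∨ Disjoint (D n x₁) (D n x₂))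
    (Q : ℕ → Set ℝ) (hQ : ∀ n, MeasurableSet (Q n))
    (hsum : ∀ᵐ x, x ∈ X → Summable (fun n : ℕ =>
      (volume (Q n ∩ D n x)).toReal / (volume (D n x)).toReal)) :
    volume {x ∈ X | {n : ℕ | x ∈ Q n}.Infinite} = 0 :=
  borel_cantelli_intervals_general X hX D hmem hint hconv hdisj Q hsum

end
end
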